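/- arXiv:2204.03343 — 2 statements merged into one kernel-verified Lean document; each statement's English description precedes it below -/
import Mathlib

section
/- Let M be a positive integer, let A be a positive definite real M×M matrix, let σ > 0, let v̂, z ∈ ℝ^M, and let q₀ ∈ ℝ. Then ∫_{ℝ^M} exp(−(1/2)(z − ε − v̂)ᵀ A (z − ε − v̂) + q₀) · (2πσ²)^{−M/2} exp(−‖ε‖²/(2σ²)) dε = exp(q₀) · σ^{−M} · (det(A + σ⁻²·I))^{−1/2} · exp(−(1/2)(z − v̂)ᵀ (A⁻¹ + σ²·I)⁻¹ (z − v̂)), where the integral is with respect to Lebesgue measure on ℝ^M. -/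
/-!
Completing the square in `ε` turns the integrand into a constant times an unnormalised Gaussian
with precision matrix `B = A + σ⁻²I` centred at `B⁻¹A(z − v̂)`. The quadratic form left over in
`z − v̂` has matrix `A − A B⁻¹ A`, which is `(A⁻¹ + σ²I)⁻¹` by the Woodbury identity. Finally
`∫ exp(−½ xᵀBx) dx = (2π)^{M/2} / √(det B)`, by writing `B = CᵀC` and substituting `y = Cx`.
-/

open Matrix MeasureTheory Real
open scoped MatrixOrder

variable {ι : Type*} [Fintype ι]

theorem Matrix.IsSymm.dotProduct_mulVec_comm {A : Matrix ι ι ℝ} (hA : A.IsSymm) (x y : ι → ℝ) :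
    x ⬝ᵥ A *ᵥ y = y ⬝ᵥ A *ᵥ x := by
  rw [dotProduct_mulVec, ← mulVec_transpose, hA.eq, dotProduct_comm]

theorem integral_exp_neg_half_dotProduct_self :
    ∫ x : ι → ℝ, exp (-(1 / 2) * (x ⬝ᵥ x)) = √(2 * π) ^ Fintype.card ι := by
  have hprod : ∀ x : ι → ℝ, exp (-(1 / 2) * (x ⬝ᵥ x)) = ∏ i, exp (-(1 / 2) * x i ^ 2) := by
    intro x
    rw [← exp_sum, dotProduct, Finset.mul_sum]
    simp only [sq]
  simp_rw [hprod]
  rw [volume_pi, integral_fintype_prod_eq_pow (fun t : ℝ ↦ exp (-(1 / 2) * t ^ 2)),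
    integral_gaussian]
  congr 2
  ring

variable [DecidableEq ι]

theorem integral_comp_mulVec {C : Matrix ι ι ℝ} (hC : C.det ≠ 0) (f : (ι → ℝ) → ℝ) :
    ∫ x, f (C *ᵥ x) = |C.det|⁻¹ * ∫ y, f y := by
  have hmap := Real.map_linearMap_volume_pi_eq_smul_volume_pi
    (f := Matrix.toLin' C) (by rwa [LinearMap.det_toLin'])
  rw [LinearMap.det_toLin'] at hmap
  let := invertibleOfIsUnitDet C hC.isUnit
  have hemb : MeasurableEmbedding (Matrix.toLin' C) :=
    ((C.toLinearEquiv' this).toContinuousLinearEquiv).toHomeomorph.measurableEmbedding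
  change ∫ x, f (Matrix.toLin' C x) = _
  rw [← hemb.integral_map, hmap, integral_smul_measure, ENNReal.toReal_ofReal (abs_nonneg _),
    abs_inv, smul_eq_mul]

theorem Matrix.PosDef.integral_exp_neg_half_dotProduct_mulVec {B : Matrix ι ι ℝ} (hB : B.PosDef) :
    ∫ x : ι → ℝ, exp (-(1 / 2) * (x ⬝ᵥ B *ᵥ x)) = √(2 * π) ^ Fintype.card ι / √B.det := by
  obtain ⟨C, rfl⟩ := CStarAlgebra.nonneg_iff_eq_star_mul_self.mp hB.posSemidef.nonneg
  have hdet : (star C * C).det = C.det ^ 2 := by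
    rw [det_mul, star_eq_conjTranspose, det_conjTranspose, star_trivial, sq]
  have hC : C.det ≠ 0 := fun h ↦ hB.det_pos.ne' (by rw [hdet, h]; ring)
  have hquad : ∀ x : ι → ℝ, x ⬝ᵥ (star C * C) *ᵥ x = (C *ᵥ x) ⬝ᵥ (C *ᵥ x) := by
    intro x
    rw [← mulVec_mulVec, dotProduct_mulVec, star_eq_conjTranspose,
      conjTranspose_eq_transpose_of_trivial, vecMul_transpose]
  simp_rw [hquad]
  rw [integral_comp_mulVec hC (fun y ↦ exp (-(1 / 2) * (y ⬝ᵥ y))),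
    integral_exp_neg_half_dotProduct_self, hdet, sqrt_sq_eq_abs, div_eq_inv_mul]

theorem Matrix.dotProduct_mulVec_sub_add_dotProduct_mulVec {A C : Matrix ι ι ℝ} (hA : A.IsSymm)
    (hC : C.IsSymm) (hAC : IsUnit (A + C).det) (m ε : ι → ℝ) :
    (m - ε) ⬝ᵥ A *ᵥ (m - ε) + ε ⬝ᵥ C *ᵥ ε
      = (ε - (A + C)⁻¹ *ᵥ A *ᵥ m) ⬝ᵥ (A + C) *ᵥ (ε - (A + C)⁻¹ *ᵥ A *ᵥ m)
        + m ⬝ᵥ (A - A * (A + C)⁻¹ * A) *ᵥ m := by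
  set B := A + C
  set μ := B⁻¹ *ᵥ A *ᵥ m
  have hBμ : B *ᵥ μ = A *ᵥ m := by rw [mulVec_mulVec, mul_nonsing_inv _ hAC, one_mulVec]
  have hμ : μ ⬝ᵥ A *ᵥ m = m ⬝ᵥ (A * B⁻¹ * A) *ᵥ m := by
    rw [hA.dotProduct_mulVec_comm, ← mulVec_mulVec, ← mulVec_mulVec]
  have hμε : μ ⬝ᵥ B *ᵥ ε = ε ⬝ᵥ A *ᵥ m := by
    rw [(hA.add hC).dotProduct_mulVec_comm, hBμ]
  simp only [mulVec_sub, dotProduct_sub, sub_dotProduct, sub_mulVec, hBμ, hμε, ← hμ]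
  rw [hA.dotProduct_mulVec_comm m ε, add_mulVec, dotProduct_add]
  ring

theorem Matrix.inv_inv_add_smul_one {K : Type*} [Field K] {A : Matrix ι ι K} (hA : IsUnit A.det)
    {s : K} (hs : s ≠ 0) (hAs : IsUnit (A + s⁻¹ • 1).det) :
    (A⁻¹ + s • 1)⁻¹ = A - A * (A + s⁻¹ • 1)⁻¹ * A := by
  have hs1 : (s • 1 : Matrix ι ι K)⁻¹ = s⁻¹ • 1 :=
    inv_eq_left_inv (by rw [smul_mul_smul, one_mul, inv_mul_cancel₀ hs, one_smul])
  have := add_mul_mul_inv_eq_sub (A := A⁻¹) (U := 1) (C := s • 1) (V := 1)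
    ((isUnit_iff_isUnit_det _).mpr (isUnit_nonsing_inv_det A hA))
    (isUnit_one.smul (Units.mk0 s hs))
    (by rwa [hs1, mul_one, one_mul, nonsing_inv_nonsing_inv A hA, add_comm, isUnit_iff_isUnit_det])
  simpa [hs1, nonsing_inv_nonsing_inv A hA, add_comm] using this

theorem two_pi_mul_sq_rpow_mul_sqrt_two_pi_pow {σ : ℝ} (hσ : 0 < σ) (n : ℕ) :
    (2 * π * σ ^ 2) ^ (-(n : ℝ) / 2) * √(2 * π) ^ n = σ ^ (-(n : ℝ)) := by
  have h2π : 0 < √(2 * π) := by positivity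
  have hsq : 2 * π * σ ^ 2 = (√(2 * π) * σ) ^ 2 := by
    rw [mul_pow, sq_sqrt (by positivity)]
  rw [hsq, ← rpow_natCast_mul (by positivity), Nat.cast_ofNat,
    mul_div_cancel₀ _ two_ne_zero, mul_rpow h2π.le hσ.le, rpow_neg h2π.le, rpow_natCast,
    mul_right_comm, inv_mul_cancel₀ (by positivity), one_mul]

theorem stmt_2_general (M : ℕ) (A : Matrix (Fin M) (Fin M) ℝ)
    (hA : A.PosDef) (σ : ℝ) (hσ : 0 < σ) (vhat z : Fin M → ℝ) (q₀ : ℝ) :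
    ∫ ε : Fin M → ℝ,
        Real.exp (-(1 / 2) * ((z - ε - vhat) ⬝ᵥ (A *ᵥ (z - ε - vhat))) + q₀)
          * ((2 * π * σ ^ 2) ^ (-(M : ℝ) / 2) * Real.exp (-(ε ⬝ᵥ ε) / (2 * σ ^ 2)))
      = Real.exp q₀ * σ ^ (-(M : ℝ))
          * ((A + (σ ^ 2)⁻¹ • (1 : Matrix (Fin M) (Fin M) ℝ)).det) ^ (-(1 : ℝ) / 2)
          * Real.exp (-(1 / 2) * ((z - vhat) ⬝ᵥ
              (((A⁻¹ + σ ^ 2 • (1 : Matrix (Fin M) (Fin M) ℝ))⁻¹) *ᵥ (z - vhat)))) := by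
  set B := A + (σ ^ 2)⁻¹ • (1 : Matrix (Fin M) (Fin M) ℝ)
  have hB : B.PosDef := hA.add_posSemidef (PosSemidef.one.smul (by positivity))
  set μ := B⁻¹ *ᵥ A *ᵥ (z - vhat)
  set K := (2 * π * σ ^ 2) ^ (-(M : ℝ) / 2)
  set R := (z - vhat) ⬝ᵥ (A - A * B⁻¹ * A) *ᵥ (z - vhat)
  have integrand : ∀ ε : Fin M → ℝ,
      exp (-(1 / 2) * ((z - ε - vhat) ⬝ᵥ (A *ᵥ (z - ε - vhat))) + q₀)
          * (K * exp (-(ε ⬝ᵥ ε) / (2 * σ ^ 2)))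
        = K * exp q₀ * exp (-(1 / 2) * R) * exp (-(1 / 2) * ((ε - μ) ⬝ᵥ B *ᵥ (ε - μ))) := by
    intro ε
    have hsq := dotProduct_mulVec_sub_add_dotProduct_mulVec
      (isHermitian_iff_isSymm.mp hA.isHermitian) (isSymm_one.smul (σ ^ 2)⁻¹)
      hB.det_pos.ne'.isUnit (z - vhat) ε
    rw [smul_mulVec, one_mulVec, dotProduct_smul, smul_eq_mul] at hsq
    rw [sub_right_comm, mul_left_comm]
    simp only [mul_assoc, ← exp_add]
    congr 2
    linear_combination (-(1 / 2) : ℝ) * hsq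
  simp_rw [integrand]
  rw [integral_const_mul, integral_sub_right_eq_self (fun y ↦ exp (-(1 / 2) * (y ⬝ᵥ B *ᵥ y))) μ,
    hB.integral_exp_neg_half_dotProduct_mulVec, Fintype.card_fin,
    inv_inv_add_smul_one hA.det_pos.ne'.isUnit (pow_ne_zero 2 hσ.ne') hB.det_pos.ne'.isUnit,
    ← two_pi_mul_sq_rpow_mul_sqrt_two_pi_pow hσ M, neg_div 2 (1 : ℝ), rpow_neg hB.det_pos.le,
    ← sqrt_eq_rpow]
  ring

/-- Closed-form Gaussian integral in the Laplace approximation of the marginal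
likelihood of point observations (Proposition 3): for positive definite `A`,
`σ > 0`, `v̂, z ∈ ℝ^M` and `q₀ ∈ ℝ`,
`∫ exp(−½ (z−ε−v̂)ᵀA(z−ε−v̂) + q₀) (2πσ²)^{−M/2} exp(−‖ε‖²/(2σ²)) dε
  = exp(q₀) σ^{−M} det(A + σ⁻²I)^{−1/2}
      exp(−½ (z−v̂)ᵀ (A⁻¹+σ²I)⁻¹ (z−v̂))`. -/
theorem stmt_2 (M : ℕ) (hM : 0 < M) (A : Matrix (Fin M) (Fin M) ℝ)
    (hA : A.PosDef) (σ : ℝ) (hσ : 0 < σ) (vhat z : Fin M → ℝ) (q₀ : ℝ) :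
    ∫ ε : Fin M → ℝ,
        Real.exp (-(1 / 2) * ((z - ε - vhat) ⬝ᵥ (A *ᵥ (z - ε - vhat))) + q₀)
          * ((2 * π * σ ^ 2) ^ (-(M : ℝ) / 2) * Real.exp (-(ε ⬝ᵥ ε) / (2 * σ ^ 2)))
      = Real.exp q₀ * σ ^ (-(M : ℝ))
          * ((A + (σ ^ 2)⁻¹ • (1 : Matrix (Fin M) (Fin M) ℝ)).det) ^ (-(1 : ℝ) / 2)
          * Real.exp (-(1 / 2) * ((z - vhat) ⬝ᵥ
              (((A⁻¹ + σ ^ 2 • (1 : Matrix (Fin M) (Fin M) ℝ))⁻¹) *ᵥ (z - vhat)))) :=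
  stmt_2_general M A hA σ hσ vhat z q₀
end

section
/- Let (Ω, ℙ) be a probability space, let g : Ω → ℝ be a random variable whose law is the Gaussian measure with mean μ and variance σ² (σ > 0), and let g_* : Ω → ℝ be square-integrable with mean μ_* := E[g_*]. Let ρ ∈ ℝ and assume the conditional expectation of g_* given the σ-algebra generated by g satisfies E[g_* | σ(g)] = μ_* + (ρ/σ²)(g − μ) almost surely. Let c ∈ ℝ and p₀₁, p₁₁ ∈ ℝ, and define ŷ := p₁₁·𝟙_{g ≥ c} + p₀₁·𝟙_{g < c}. Then E[g_* ŷ] − E[g_*]·E[ŷ] = (p₁₁ − p₀₁) · (ρ / (√(2π) σ)) · exp(−(c − μ)²/(2σ²)). -/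
open MeasureTheory ProbabilityTheory Real
open Filter Set

lemma gpdf_eq' (μ σ : ℝ) (hσ : 0 < σ) (x : ℝ) :
    gaussianPDFReal μ ⟨σ ^ 2, sq_nonneg σ⟩ x
      = (Real.sqrt (2 * π) * σ)⁻¹ * Real.exp (-(2 * σ ^ 2)⁻¹ * (x - μ) ^ 2) := by
  simp only [gaussianPDFReal, NNReal.coe_mk]
  show (Real.sqrt (2 * π * σ ^ 2))⁻¹ * Real.exp (-(x - μ) ^ 2 / (2 * σ ^ 2)) = _
  rw [Real.sqrt_mul (by positivity) (σ ^ 2), Real.sqrt_sq hσ.le]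
  congr 1
  ring

lemma gint (μ σ : ℝ) (hσ : 0 < σ) :
    Integrable (fun x => (x - μ) * gaussianPDFReal μ ⟨σ ^ 2, sq_nonneg σ⟩ x) volume := by
  have hb : (0:ℝ) < (2 * σ ^ 2)⁻¹ := by positivity
  have h := ((integrable_mul_exp_neg_mul_sq hb).comp_sub_right μ).const_mul
    (Real.sqrt (2 * π) * σ)⁻¹
  refine h.congr (ae_of_all _ fun x => ?_)
  simp only [Function.comp]
  rw [gpdf_eq' μ σ hσ]
  ring

lemma gftc (μ σ : ℝ) (hσ : 0 < σ) (c : ℝ) :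
    ∫ x in Ioi c, (x - μ) * gaussianPDFReal μ ⟨σ ^ 2, sq_nonneg σ⟩ x
      = σ ^ 2 * gaussianPDFReal μ ⟨σ ^ 2, sq_nonneg σ⟩ c := by
  set C : ℝ := (Real.sqrt (2 * π) * σ)⁻¹ with hC
  have hCpos : 0 < C := by rw [hC]; positivity
  have hderiv : ∀ x ∈ Ici c,
      HasDerivAt (fun y : ℝ => (-(σ ^ 2) * C) * Real.exp (-(2 * σ ^ 2)⁻¹ * (y - μ) ^ 2))
        ((x - μ) * gaussianPDFReal μ ⟨σ ^ 2, sq_nonneg σ⟩ x) x := by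
    intro x _
    have h0 : HasDerivAt (fun y : ℝ => y - μ) 1 x := (hasDerivAt_id x).sub_const μ
    have h1 := h0.pow 2
    have h2 := h1.const_mul (-(2 * σ ^ 2)⁻¹)
    have h3 := h2.exp
    have h4 := h3.const_mul (-(σ ^ 2) * C)
    refine h4.congr_deriv ?_
    rw [gpdf_eq' μ σ hσ, ← hC]
    simp only [Pi.pow_apply]
    have hσ2 : (σ:ℝ) ^ 2 ≠ 0 := by positivity
    field_simp
    ring
  have htend : Tendsto (fun y : ℝ => (-(σ ^ 2) * C) * Real.exp (-(2 * σ ^ 2)⁻¹ * (y - μ) ^ 2))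
      atTop (nhds 0) := by
    have h0 : Tendsto (fun y : ℝ => y - μ) atTop atTop := by
      simpa [sub_eq_add_neg] using tendsto_atTop_add_const_right atTop (-μ) (tendsto_id (α := ℝ))
    have h1 : Tendsto (fun y : ℝ => (2 * σ ^ 2)⁻¹ * (y - μ) ^ 2) atTop atTop :=
      Tendsto.const_mul_atTop (by positivity) ((tendsto_pow_atTop two_ne_zero).comp h0)
    have h2 : Tendsto (fun y : ℝ => -(2 * σ ^ 2)⁻¹ * (y - μ) ^ 2) atTop atBot := by
      simp only [neg_mul]
      exact tendsto_neg_atTop_atBot.comp h1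
    have h3 : Tendsto (fun y : ℝ => Real.exp (-(2 * σ ^ 2)⁻¹ * (y - μ) ^ 2)) atTop (nhds 0) :=
      Real.tendsto_exp_atBot.comp h2
    have h4 := h3.const_mul (-(σ ^ 2) * C)
    rw [mul_zero] at h4
    exact h4
  have := integral_Ioi_of_hasDerivAt_of_tendsto' hderiv ((gint μ σ hσ).integrableOn) htend
  rw [this, gpdf_eq' μ σ hσ]
  ring


/-- Covariance formula `Cov[g_*, ŷ_i]` of Theorem 1 (S-BLUE): if
`g ~ N(μ, σ²)` with `σ > 0`, `g_*` is square-integrable with mean `μ_*`, the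
conditional expectation of `g_*` given `σ(g)` is `μ_* + (ρ/σ²)(g − μ)` a.s.,
and `ŷ = p₁₁ 𝟙_{g ≥ c} + p₀₁ 𝟙_{g < c}`, then
`E[g_* ŷ] − E[g_*] E[ŷ] = (p₁₁ − p₀₁) (ρ/(√(2π) σ)) exp(−(c−μ)²/(2σ²))`. -/
theorem stmt_7 {Ω : Type*} [MeasurableSpace Ω] (P : Measure Ω)
    [IsProbabilityMeasure P] (g gstar : Ω → ℝ) (hg : Measurable g)
    (μ σ : ℝ) (hσ : 0 < σ)
    (hlaw : Measure.map g P = gaussianReal μ ⟨σ ^ 2, sq_nonneg σ⟩)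
    (hsq : MemLp gstar 2 P) (μstar : ℝ) (hμstar : μstar = ∫ ω, gstar ω ∂P)
    (ρ : ℝ)
    (hcond : P[gstar | MeasurableSpace.comap g (borel ℝ)]
        =ᵐ[P] fun ω => μstar + (ρ / σ ^ 2) * (g ω - μ))
    (c p₀₁ p₁₁ : ℝ) (yhat : Ω → ℝ)
    (hyhat : yhat = fun ω => p₁₁ * Set.indicator {ω' | g ω' ≥ c} (fun _ => (1 : ℝ)) ω
        + p₀₁ * Set.indicator {ω' | g ω' < c} (fun _ => (1 : ℝ)) ω) :
    (∫ ω, gstar ω * yhat ω ∂P) - (∫ ω, gstar ω ∂P) * (∫ ω, yhat ω ∂P)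
      = (p₁₁ - p₀₁) * (ρ / (Real.sqrt (2 * π) * σ))
          * Real.exp (-(c - μ) ^ 2 / (2 * σ ^ 2)) := by
  set v : NNReal := ⟨σ ^ 2, sq_nonneg σ⟩ with hv
  have hσ2 : (σ:ℝ) ^ 2 ≠ 0 := by positivity
  -- the level set
  set s : Set Ω := g ⁻¹' Ici c with hsdef
  have hs0 : MeasurableSet s := hg measurableSet_Ici
  have hsm : MeasurableSet[MeasurableSpace.comap g (borel ℝ)] s :=
    ⟨Ici c, measurableSet_Ici, rfl⟩
  have hm : MeasurableSpace.comap g (borel ℝ) ≤ ‹MeasurableSpace Ω› := hg.comap_le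
  have hint : Integrable gstar P := hsq.integrable one_le_two
  -- density
  set f : ℝ → NNReal := fun x => (gaussianPDFReal μ v x).toNNReal with hf
  have hf_meas : Measurable f := (measurable_gaussianPDFReal μ v).real_toNNReal
  have hν : gaussianReal μ v = volume.withDensity (fun x => (f x : ENNReal)) := by
    rw [gaussianReal_of_var_ne_zero]
    · rfl
    · intro h
      apply hσ2
      exact (congrArg (fun x : NNReal => (x:ℝ)) h : σ ^ 2 = (0:ℝ))
  -- integrability of g - μ under P
  have hmeas_sub : Measurable (fun x : ℝ => x - μ) := measurable_id.sub measurable_const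
  have hνint : Integrable (fun x : ℝ => x - μ) (gaussianReal μ v) := by
    rw [hν, integrable_withDensity_iff_integrable_smul hf_meas]
    refine (gint μ σ hσ).congr (ae_of_all _ fun x => ?_)
    simp only [hf, NNReal.smul_def, smul_eq_mul,
      Real.coe_toNNReal _ (gaussianPDFReal_nonneg μ v x)]
    ring
  have hgP : Integrable (fun ω => g ω - μ) P := by
    have := (integrable_map_measure hmeas_sub.aestronglyMeasurable hg.aemeasurable).mp
      (by rwa [hlaw])
    exact this
  -- set integral of gstar over s via conditional expectation
  have hce : ∫ ω in s, gstar ω ∂P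
      = μstar * (P s).toReal + (ρ / σ ^ 2) * ∫ ω in s, (g ω - μ) ∂P := by
    rw [← setIntegral_condExp hm hint hsm]
    rw [setIntegral_congr_ae hs0 (by filter_upwards [hcond] with ω h _ using h)]
    rw [integral_add (integrable_const _).integrableOn
      ((hgP.const_mul (ρ / σ ^ 2)).integrableOn)]
    rw [setIntegral_const, integral_const_mul]
    rw [smul_eq_mul, mul_comm]
    rfl
  -- set integral of g - μ over s equals gaussian tail integral
  have hmap : ∫ ω in s, (g ω - μ) ∂P = ∫ x in Ici c, (x - μ) ∂(gaussianReal μ v) := by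
    rw [← hlaw, setIntegral_map measurableSet_Ici
      (by rw [hlaw]; exact hmeas_sub.aestronglyMeasurable) hg.aemeasurable]
  have hIci : ∫ x in Ici c, (x - μ) ∂(gaussianReal μ v)
      = σ ^ 2 * gaussianPDFReal μ v c := by
    rw [hν, setIntegral_withDensity_eq_setIntegral_smul hf_meas _ measurableSet_Ici]
    have : ∀ x : ℝ, f x • (x - μ) = (x - μ) * gaussianPDFReal μ v x := by
      intro x
      simp only [hf, NNReal.smul_def, smul_eq_mul,
        Real.coe_toNNReal _ (gaussianPDFReal_nonneg μ v x)]
      ring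
    rw [integral_congr_ae (ae_of_all _ fun x => this x)]
    rw [integral_Ici_eq_integral_Ioi]
    exact gftc μ σ hσ c
  -- yhat decomposition
  have hyhat' : yhat = fun ω => p₀₁ + (p₁₁ - p₀₁) * s.indicator (fun _ => (1:ℝ)) ω := by
    rw [hyhat]
    funext ω
    by_cases h : c ≤ g ω
    · have h' : ¬ g ω < c := not_lt.mpr h
      simp only [Set.indicator_apply, Set.mem_setOf_eq, Set.mem_preimage, Set.mem_Ici, hsdef,
        ge_iff_le, h, h', if_true, if_false,
        Set.indicator_of_mem (show ω ∈ g ⁻¹' Ici c from h)]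
      ring
    · have h' : g ω < c := not_le.mp h
      simp only [Set.indicator_apply, Set.mem_setOf_eq, Set.mem_preimage, Set.mem_Ici, hsdef,
        ge_iff_le, h, h', if_true, if_false,
        Set.indicator_of_notMem (show ω ∉ g ⁻¹' Ici c from h)]
      ring
  -- integral of yhat
  have hind : Integrable (s.indicator (fun _ => (1:ℝ))) P :=
    (integrable_const (1:ℝ)).indicator hs0
  have hyint : ∫ ω, yhat ω ∂P = p₀₁ + (p₁₁ - p₀₁) * (P s).toReal := by
    rw [hyhat']
    rw [integral_add (integrable_const _) (hind.const_mul _)]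
    rw [integral_const, integral_const_mul, integral_indicator hs0, setIntegral_const]
    simp [measure_univ, measureReal_def]

  -- integral of gstar * yhat
  have hprod : ∫ ω, gstar ω * yhat ω ∂P
      = p₀₁ * μstar + (p₁₁ - p₀₁) * ∫ ω in s, gstar ω ∂P := by
    have heq : (fun ω => gstar ω * yhat ω)
        = fun ω => p₀₁ * gstar ω + (p₁₁ - p₀₁) * s.indicator gstar ω := by
      rw [hyhat']
      funext ω
      by_cases h : ω ∈ s
      · simp only [Set.indicator_of_mem h]
        ring
      · simp only [Set.indicator_of_notMem h]
        ring
    rw [heq, integral_add (hint.const_mul _) ((hint.indicator hs0).const_mul _)]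
    rw [integral_const_mul, integral_const_mul, integral_indicator hs0, ← hμstar]
  rw [hprod, hyint, hce, hmap, hIci, ← hμstar, gpdf_eq' μ σ hσ]
  have hexp : Real.exp (-(2 * σ ^ 2)⁻¹ * (c - μ) ^ 2)
      = Real.exp (-(c - μ) ^ 2 / (2 * σ ^ 2)) := by
    congr 1
    ring
  rw [hexp]
  field_simp
  ring
end
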